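/- (Equation (2.22), first case) Let m ≥ 1 and consider data (Ȳ_1,n_1),…,(Ȳ_{m+1},n_{m+1}). Let μ̂_{j,m} denote the SDMMSA estimates computed from the first m data points, and let i_1(m+1) denote the first SDMMSA index computed from all m+1 data points (i.e., the smallest index attaining max_{1 ≤ j ≤ m+1} Ȳ_{j,m+1}). If Ȳ_{m+1} > μ̂_{m,m}, then i_1(m+1) = m+1. -/

import Mathlib

/-!
The estimate `μ̂_{m,m}` is the pooled mean of the top block chosen for the first `m` points, i.e.
the maximum of the pooled means `Ȳ_{j,m}`. If `Ȳ_{m+1}` exceeds it, then `Ȳ_{j,m+1}` is a weighted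
average of `Ȳ_{j,m} < Ȳ_{m+1}` and `Ȳ_{m+1}` with positive weights, so
`Ȳ_{j,m+1} < Ȳ_{m+1} = Ȳ_{m+1,m+1}`: the singleton block `{m+1}` is the unique maximiser.
-/

open Finset

noncomputable section SDMMSA

/-- Pooled weight `n_{i,j} = ∑_{h=i}^j n_h`. -/
def pooledWeight (n : ℕ → ℝ) (i j : ℕ) : ℝ := ∑ h ∈ Finset.Icc i j, n h

/-- Pooled (weighted) mean `Ȳ_{i,j} = (∑_{h=i}^j n_h Y_h) / n_{i,j}`. -/
def pooledMean (n Y : ℕ → ℝ) (i j : ℕ) : ℝ :=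
  (∑ h ∈ Finset.Icc i j, n h * Y h) / pooledWeight n i j

/-- The first SDMMSA index for the data `(Y_1,n_1),…,(Y_t,n_t)`:
the smallest `j ∈ [1,t]` at which `Ȳ_{j,t} = max_{1 ≤ j' ≤ t} Ȳ_{j',t}`. -/
def firstIdx (n Y : ℕ → ℝ) (t : ℕ) : ℕ :=
  sInf {j | 1 ≤ j ∧ j ≤ t ∧ ∀ j', 1 ≤ j' → j' ≤ t → pooledMean n Y j' t ≤ pooledMean n Y j t}

/-- Fuel-based recursion implementing the SDMMSA step-down procedure: on data range `[1,t]`,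
every `i ≥ i₁ = firstIdx n Y t` gets the pooled mean `Ȳ_{i₁,t}` of the top block, and for
`i < i₁` we recurse on the data range `[1, i₁ - 1]`.  A fuel of `t` suffices since the
range shrinks strictly at each step. -/
def sdmmsaAux (n Y : ℕ → ℝ) : ℕ → ℕ → ℕ → ℝ
  | 0, _, _ => 0
  | fuel + 1, t, i =>
      if firstIdx n Y t ≤ i then pooledMean n Y (firstIdx n Y t) t
      else sdmmsaAux n Y fuel (firstIdx n Y t - 1) i

/-- `muhat n Y k i` is the SDMMSA estimate `μ̂_i` computed from the data
`(Y_1,n_1),…,(Y_k,n_k)`. -/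
def muhat (n Y : ℕ → ℝ) (k i : ℕ) : ℝ := sdmmsaAux n Y k k i

/-- The SDMMSA indices `i_u` computed from the data `(Y_1,n_1),…,(Y_k,n_k)`:
`sdIdx n Y k 0 = i_0 = k+1` and `i_{u+1}` is the first SDMMSA index of `[1, i_u - 1]`. -/
def sdIdx (n Y : ℕ → ℝ) (k : ℕ) : ℕ → ℕ
  | 0 => k + 1
  | u + 1 => firstIdx n Y (sdIdx n Y k u - 1)

/-- The number of steps `h` of the SDMMSA: the first `u` with `i_u = 1`. -/
def sdSteps (n Y : ℕ → ℝ) (k : ℕ) : ℕ := sInf {u | sdIdx n Y k u = 1}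

end SDMMSA

section

variable {n Y : ℕ → ℝ}

lemma pooledWeight_pos {i j : ℕ} (hij : i ≤ j) (hn : ∀ h ∈ Icc i j, 0 < n h) :
    0 < pooledWeight n i j :=
  sum_pos hn ⟨i, mem_Icc.mpr ⟨le_rfl, hij⟩⟩

lemma pooledMean_self {i : ℕ} (hn : n i ≠ 0) : pooledMean n Y i i = Y i := by
  rw [pooledMean, pooledWeight, Icc_self, sum_singleton, sum_singleton, mul_div_cancel_left₀ _ hn]

lemma pooledMean_succ_lt_of_pooledMean_lt {i j : ℕ} (hij : i ≤ j) (hW : 0 < pooledWeight n i j)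
    (hn : 0 < n (j + 1)) (hlt : pooledMean n Y i j < Y (j + 1)) :
    pooledMean n Y i (j + 1) < Y (j + 1) := by
  rw [pooledMean, div_lt_iff₀ hW] at hlt
  rw [pooledMean, pooledWeight, sum_Icc_succ_top (by omega), sum_Icc_succ_top (by omega)]
  rw [pooledWeight] at hW hlt
  rw [div_lt_iff₀ (by positivity)]
  linarith

lemma firstIdx_spec {t : ℕ} (ht : 1 ≤ t) :
    1 ≤ firstIdx n Y t ∧ firstIdx n Y t ≤ t ∧
      ∀ j, 1 ≤ j → j ≤ t → pooledMean n Y j t ≤ pooledMean n Y (firstIdx n Y t) t := by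
  obtain ⟨b, hb, hmax⟩ := exists_max_image (Icc 1 t) (fun j => pooledMean n Y j t)
    ⟨1, mem_Icc.mpr ⟨le_rfl, ht⟩⟩
  rw [mem_Icc] at hb
  exact Nat.sInf_mem (s := {j | 1 ≤ j ∧ j ≤ t ∧ ∀ j', 1 ≤ j' → j' ≤ t →
      pooledMean n Y j' t ≤ pooledMean n Y j t})
    ⟨b, hb.1, hb.2, fun j h1 h2 => hmax j (mem_Icc.mpr ⟨h1, h2⟩)⟩

lemma firstIdx_eq_self_of_forall_lt {t : ℕ} (ht : 1 ≤ t)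
    (hlt : ∀ j, 1 ≤ j → j < t → pooledMean n Y j t < pooledMean n Y t t) :
    firstIdx n Y t = t := by
  obtain ⟨h1, hle, hmax⟩ := firstIdx_spec (n := n) (Y := Y) ht
  refine hle.antisymm (not_lt.mp fun hfirst => ?_)
  exact (hmax t ht le_rfl).not_gt (hlt _ h1 hfirst)

lemma muhat_of_firstIdx_le {m i : ℕ} (hm : 1 ≤ m) (hi : firstIdx n Y m ≤ i) :
    muhat n Y m i = pooledMean n Y (firstIdx n Y m) m := by
  obtain ⟨k, rfl⟩ := Nat.exists_eq_add_of_le' hm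
  rw [muhat, sdmmsaAux, if_pos hi]

lemma pooledMean_le_muhat_self {m j : ℕ} (hm : 1 ≤ m) (hj : 1 ≤ j) (hjm : j ≤ m) :
    pooledMean n Y j m ≤ muhat n Y m m := by
  obtain ⟨-, hle, hmax⟩ := firstIdx_spec (n := n) (Y := Y) hm
  rw [muhat_of_firstIdx_le hm hle]
  exact hmax j hj hjm

end

/-- eq. (2.22), first case: if `Ȳ_{m+1} > μ̂_{m,m}`, the first SDMMSA index
for the `m+1` data points is `i_1(m+1) = m+1`. -/
theorem firstIdx_succ_of_large_last (m : ℕ) (hm : 1 ≤ m) (n Y : ℕ → ℝ)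
    (hn : ∀ h, 1 ≤ h → h ≤ m + 1 → 0 < n h)
    (hY : muhat n Y m m < Y (m + 1)) :
    firstIdx n Y (m + 1) = m + 1 := by
  have hlast : 0 < n (m + 1) := hn (m + 1) (by omega) le_rfl
  refine firstIdx_eq_self_of_forall_lt (by omega) fun j hj hjm => ?_
  rw [pooledMean_self hlast.ne']
  refine pooledMean_succ_lt_of_pooledMean_lt (by omega) ?_ hlast ?_
  · exact pooledWeight_pos (by omega) fun h hh => by
      rw [mem_Icc] at hh
      exact hn h (by omega) (by omega)
  · exact (pooledMean_le_muhat_self hm hj (by omega)).trans_lt hY
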